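/- arXiv:1901.05721 — 2 statements merged into one kernel-verified Lean document; each statement's English description precedes it below -/
import Mathlib

section
/- Let G = [I_k | P] be a k × n binary matrix in systematic form and H = [Pᵀ | I_{n−k}]. If S ⊆ {1,…,n} is a set of k indices such that the columns of G indexed by S are linearly dependent, then the n−k columns of H indexed by the complement {1,…,n} \ S are linearly dependent. -/
/-!
Since `|S| = k`, the columns of `G` indexed by `S` form a singular square matrix, so some nonzero
`x` has `xG` vanishing on `S`. The codeword `xG` is nonzero (its first `k` coordinates are `x`), is
supported on the complement of `S`, and lies in the kernel of `H` because `H Gᵀ = 0`.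
-/

/-- The columns of `M` indexed by `S` are linearly dependent over `F₂`: there is a
nontrivial combination, supported on `S`, of the columns equal to zero. -/
def colsDep {r : ℕ} {ι : Type} [Fintype ι] [DecidableEq ι]
    (M : Matrix (Fin r) ι (ZMod 2)) (S : Finset ι) : Prop :=
  ∃ c : ι → ZMod 2, c ≠ 0 ∧ (∀ j, c j ≠ 0 → j ∈ S) ∧ M.mulVec c = 0

open Matrix

theorem Matrix.exists_vecMul_eq_zero_on_of_mulVec_eq_zero {K κ ι : Type*} [Field K]
    [Fintype κ] [DecidableEq κ] [Fintype ι] (M : Matrix κ ι K) {S : Finset ι}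
    (hS : S.card = Fintype.card κ) {c : ι → K} (hc : c ≠ 0) (hcS : ∀ j, c j ≠ 0 → j ∈ S)
    (hMc : M *ᵥ c = 0) : ∃ x ≠ 0, ∀ j ∈ S, (x ᵥ* M) j = 0 := by
  let e : κ ≃ S := Fintype.equivOfCardEq (by simp [hS])
  let M' : Matrix κ κ K := M.submatrix id (fun j => (e j : ι))
  have hc_off : ∀ j ∉ S, c j = 0 := fun j hj => by_contra fun h => hj (hcS j h)
  have hM'c : M' *ᵥ (fun j => c (e j)) = 0 := by
    funext i
    calc (M' *ᵥ fun j => c (e j)) i = ∑ s : S, M i s * c s :=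
          Equiv.sum_comp e (fun s : S => M i s * c s)
      _ = (M *ᵥ c) i := by
          rw [Finset.sum_coe_sort S (fun s => M i s * c s)]
          exact Finset.sum_subset S.subset_univ fun j _ hj => by simp [hc_off j hj]
      _ = 0 := congrFun hMc i
  have hc' : (fun j => c (e j)) ≠ 0 := by
    obtain ⟨j, hj⟩ := Function.ne_iff.mp hc
    intro h
    simpa using hj (by simpa using congrFun h (e.symm ⟨j, hcS j hj⟩))
  have hdet : M'.det = 0 := exists_mulVec_eq_zero_iff.mp ⟨_, hc', hM'c⟩
  obtain ⟨x, hx, hxM'⟩ := exists_vecMul_eq_zero_iff.mpr hdet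
  refine ⟨x, hx, fun j hj => ?_⟩
  have hxj : (x ᵥ* M) (e (e.symm ⟨j, hj⟩)) = 0 := congrFun hxM' (e.symm ⟨j, hj⟩)
  simpa using hxj

theorem Matrix.fromCols_neg_transpose_one_mulVec_vecMul_fromCols_one {R k m : Type*} [CommRing R]
    [Fintype k] [DecidableEq k] [Fintype m] [DecidableEq m] (P : Matrix k m R) (x : k → R) :
    fromCols (-Pᵀ) 1 *ᵥ (x ᵥ* fromCols 1 P) = 0 := by
  rw [vecMul_fromCols, fromCols_mulVec_sumElim, vecMul_one, one_mulVec, neg_mulVec,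
    mulVec_transpose, neg_add_cancel]

/-- For `G = [I_k | P]` and `H = [Pᵀ | I_m]` (columns indexed by
`Fin k ⊕ Fin m`), if `S` is a set of `k` column indices whose columns in `G` are linearly
dependent, then the `m = n − k` columns of `H` indexed by the complement of `S` are
linearly dependent. -/
theorem stmt_3 {k m : ℕ} (P : Matrix (Fin k) (Fin m) (ZMod 2))
    (S : Finset (Fin k ⊕ Fin m)) (hS : S.card = k)
    (hdep : colsDep (Matrix.fromCols 1 P) S) :
    colsDep (Matrix.fromCols P.transpose (1 : Matrix (Fin m) (Fin m) (ZMod 2))) Sᶜ := by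
  obtain ⟨c, hc, hcS, hGc⟩ := hdep
  obtain ⟨x, hx, hxS⟩ := exists_vecMul_eq_zero_on_of_mulVec_eq_zero _
    (by rwa [Fintype.card_fin]) hc hcS hGc
  refine ⟨x ᵥ* fromCols 1 P, ?_, fun j hj => Finset.mem_compl.mpr fun hjS => hj (hxS j hjS), ?_⟩
  · rw [vecMul_fromCols, vecMul_one]
    exact fun h => hx (funext fun i => congrFun h (Sum.inl i))
  · have hneg : -Pᵀ = Pᵀ := ZModModule.neg_eq_self Pᵀ
    simpa only [hneg] using fromCols_neg_transpose_one_mulVec_vecMul_fromCols_one P x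
end

section
/- Let G = [I_k | P] be a k × n binary matrix in systematic form and H = [Pᵀ | I_{n−k}]. A set S ⊆ {1,…,n} of k indices yields linearly independent columns in G if and only if the complementary set {1,…,n} \ S of n−k indices yields linearly independent columns in H. -/
/-!
Split `S = A ⊔ B` with `A ⊆ Fin k` and `B ⊆ Fin m`. A vector `(u, v)` supported on `S` is killed
by `[1 | P]` iff `u = -P v`, and `u` vanishes off `A` iff `P v` does; so the `S`-columns of
`[1 | P]` are independent iff the submatrix `P[Aᶜ, B]` has independent columns. Symmetrically,
the `Sᶜ`-columns of `[Pᵀ | 1]` are independent iff `Pᵀ[B, Aᶜ]` has independent columns, i.e.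
`P[Aᶜ, B]` has independent rows. Since `|S| = k`, the submatrix `P[Aᶜ, B]` is square, and for a
square matrix over a field row rank equals column rank.
-/

/-- The columns of `M` indexed by `S` are linearly independent over `F₂`. -/
def colsIndep {r : ℕ} {ι : Type} [Fintype ι]
    (M : Matrix (Fin r) ι (ZMod 2)) (S : Finset ι) : Prop :=
  LinearIndependent (ZMod 2) (fun j : {x // x ∈ S} => fun i => M i j.val)

open Matrix

namespace Matrix

section CommRing

variable {R : Type*} [CommRing R]

theorem linearIndependent_col_submatrix_iff {l m n : Type*} [Fintype n]
    (M : Matrix m n R) (f : l → m) (s : Finset n) :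
    LinearIndependent R (M.submatrix f ((↑) : s → n)).col ↔
      ∀ c : n → R, (∀ j ∉ s, c j = 0) → (∀ i, (M *ᵥ c) (f i) = 0) → c = 0 := by
  classical
  have submatrix_mulVec : ∀ c : n → R, (∀ j ∉ s, c j = 0) →
      M.submatrix f ((↑) : s → n) *ᵥ (fun j => c j) = fun i => (M *ᵥ c) (f i) := by
    intro c hc
    ext i
    simp only [mulVec, dotProduct, submatrix_apply]
    rw [Finset.sum_coe_sort s (fun j => M (f i) j * c j)]
    exact Finset.sum_subset (Finset.subset_univ s) fun j _ hj => by rw [hc j hj, mul_zero]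
  rw [← mulVec_injective_iff, ← coe_mulVecLin, injective_iff_map_eq_zero]
  constructor
  · intro h c hc hMc
    have hcs := h (fun j => c j) (by rw [mulVecLin_apply, submatrix_mulVec c hc]; exact funext hMc)
    ext j
    by_cases hj : j ∈ s
    · exact congrFun hcs ⟨j, hj⟩
    · exact hc j hj
  · intro h w hw
    let c : n → R := fun j => if hj : j ∈ s then w ⟨j, hj⟩ else 0
    have hc : ∀ j ∉ s, c j = 0 := fun j hj => dif_neg hj
    have hcw : (fun j : s => c j) = w := funext fun j => dif_pos j.2
    rw [mulVecLin_apply, ← hcw, submatrix_mulVec c hc] at hw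
    rw [← hcw, h c hc (congrFun hw)]
    rfl

theorem fromCols_one_kernel_disjSum_trivial_iff {α β : Type*} [Fintype α] [Fintype β]
    [DecidableEq α] (P : Matrix α β R) (A : Finset α) (B : Finset β) :
    (∀ c : α ⊕ β → R, (∀ j ∉ A.disjSum B, c j = 0) → fromCols 1 P *ᵥ c = 0 → c = 0) ↔
      ∀ v : β → R, (∀ j ∉ B, v j = 0) → (∀ i : ↥Aᶜ, (P *ᵥ v) i = 0) → v = 0 := by
  constructor
  · intro h v hv hPv
    have hc : ∀ j ∉ A.disjSum B, Sum.elim (-(P *ᵥ v)) v j = 0 := by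
      rintro (a | b) hj
      · simpa using hPv ⟨a, by simpa using hj⟩
      · exact hv b (by simpa using hj)
    have hc0 := h _ hc (by rw [fromCols_mulVec_sumElim, one_mulVec, neg_add_cancel])
    rw [← Sum.elim_zero_zero, Sum.elim_eq_iff] at hc0
    exact hc0.2
  · intro h c hc hGc
    rw [← Sum.elim_comp_inl_inr c] at hGc hc ⊢
    set u := c ∘ Sum.inl
    set v := c ∘ Sum.inr
    rw [fromCols_mulVec_sumElim, one_mulVec] at hGc
    have hv : v = 0 := h v (fun b hb => hc (.inr b) (by simpa using hb)) fun ⟨a, ha⟩ => by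
      have hu : u a = 0 := hc (.inl a) (by simpa using ha)
      simpa [hu] using congrFun hGc a
    rw [hv, mulVec_zero, add_zero] at hGc
    rw [hGc, hv, Sum.elim_zero_zero]

theorem linearIndependent_fromCols_one_col_iff {α β : Type*} [Fintype α] [Fintype β]
    [DecidableEq α] (P : Matrix α β R) (A : Finset α) (B : Finset β) :
    LinearIndependent R (fun j : A.disjSum B => (fromCols (1 : Matrix α α R) P).col (j : α ⊕ β)) ↔
      LinearIndependent R (P.submatrix ((↑) : ↥Aᶜ → α) ((↑) : B → β)).col := by
  rw [linearIndependent_col_submatrix_iff, ← fromCols_one_kernel_disjSum_trivial_iff]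
  exact (fromCols 1 P).linearIndependent_col_submatrix_iff id _ |>.trans <| by
    simp only [id, ← funext_iff, Pi.zero_def]

theorem linearIndependent_fromCols_col_swap {α β m : Type*} (Q : Matrix m α R)
    (P : Matrix m β R) (A : Finset α) (B : Finset β) :
    LinearIndependent R (fun j : A.disjSum B => (fromCols Q P).col (j : α ⊕ β)) ↔
      LinearIndependent R (fun j : B.disjSum A => (fromCols P Q).col (j : β ⊕ α)) := by
  refine linearIndependent_equiv' (R := R) (M := m → R)
    ((Equiv.sumComm α β).subtypeEquiv fun j => ?_) ?_
  · cases j <;> simp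
  · ext ⟨j | j, _⟩ <;> rfl

end CommRing

theorem linearIndependent_col_iff_row_of_card_eq {K m n : Type*} [Field K] [Fintype m]
    [Fintype n] (h : Fintype.card m = Fintype.card n) (M : Matrix m n K) :
    LinearIndependent K M.col ↔ LinearIndependent K M.row := by
  rw [linearIndependent_iff_card_eq_finrank_span, linearIndependent_iff_card_eq_finrank_span,
    Set.finrank, Set.finrank, ← rank_eq_finrank_span_cols, ← rank_eq_finrank_span_row, h]

end Matrix

theorem colsIndep_iff {r : ℕ} {ι : Type} [Fintype ι] (M : Matrix (Fin r) ι (ZMod 2))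
    (S : Finset ι) : colsIndep M S ↔ LinearIndependent (ZMod 2) (fun j : S => M.col j) :=
  Iff.rfl

/-- For `G = [I_k | P]` and `H = [Pᵀ | I_m]` (columns indexed by
`Fin k ⊕ Fin m`), a set `S` of `k` indices yields linearly independent columns in `G`
iff the complementary set of `m = n − k` indices yields linearly independent columns
in `H`. -/
theorem stmt_4 {k m : ℕ} (P : Matrix (Fin k) (Fin m) (ZMod 2))
    (S : Finset (Fin k ⊕ Fin m)) (hS : S.card = k) :
    colsIndep (Matrix.fromCols 1 P) S ↔
      colsIndep (Matrix.fromCols P.transpose (1 : Matrix (Fin m) (Fin m) (ZMod 2))) Sᶜ := by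
  have hcard : Fintype.card ↥S.toLeftᶜ = Fintype.card S.toRight := by
    have := S.card_toLeft_add_card_toRight
    simp only [Fintype.card_coe, Finset.card_compl, Fintype.card_fin]
    omega
  set A := S.toLeft
  set B := S.toRight
  have hSc : Sᶜ = Aᶜ.disjSum Bᶜ := by ext (a | b) <;> simp [A, B]
  rw [colsIndep_iff, colsIndep_iff, hSc, ← S.toLeft_disjSum_toRight,
    linearIndependent_fromCols_one_col_iff, linearIndependent_fromCols_col_swap,
    linearIndependent_fromCols_one_col_iff, compl_compl,
    linearIndependent_col_iff_row_of_card_eq hcard, ← transpose_submatrix, col_transpose]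
end
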